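/- In the category of graphs arc-labelled by an alphabet Σ (the slice category over the one-node graph with arc set Σ), a labelled graph is separated for the double negation topology if and only if it is a labelled transition system, i.e., for every pair of nodes x, y and every label α there is at most one α-labelled arc from x to y. -/

import Mathlib

/-- A directed graph: nodes, arcs, source and target maps. -/
structure DirGraph where
  N : Type
  A : Type
  src : A → N
  tgt : A → N

/-- A graph morphism. -/
@[ext]
structure Hom (G H : DirGraph) where
  fN : G.N → H.N
  fA : G.A → H.A
  hsrc : ∀ a, H.src (fA a) = fN (G.src a)
  htgt : ∀ a, H.tgt (fA a) = fN (G.tgt a)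

/-- Composition of graph morphisms. -/
def Hom.comp {G H K : DirGraph} (g : Hom H K) (f : Hom G H) : Hom G K where
  fN := g.fN ∘ f.fN
  fA := g.fA ∘ f.fA
  hsrc a := by simp [g.hsrc, f.hsrc]
  htgt a := by simp [g.htgt, f.htgt]

/-- A subgraph of `G`, given by a set of nodes and a set of arcs whose
endpoints belong to the node set. -/
def IsSubgraph (G : DirGraph) (SN : Set G.N) (SA : Set G.A) : Prop :=
  ∀ a ∈ SA, G.src a ∈ SN ∧ G.tgt a ∈ SN

/-- The subgraph of `Y` determined by node set `SN` and arc set `SA`. -/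
def subG (Y : DirGraph) (SN : Set Y.N) (SA : Set Y.A) (h : IsSubgraph Y SN SA) : DirGraph where
  N := SN
  A := SA
  src a := ⟨Y.src a.val, (h a.val a.prop).1⟩
  tgt a := ⟨Y.tgt a.val, (h a.val a.prop).2⟩

/-- The inclusion of a subgraph. -/
def incl (Y : DirGraph) (SN : Set Y.N) (SA : Set Y.A) (h : IsSubgraph Y SN SA) :
    Hom (subG Y SN SA h) Y :=
  ⟨Subtype.val, Subtype.val, fun _ => rfl, fun _ => rfl⟩

/-- A graph arc-labelled by an alphabet `S` (an object of the slice over the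
one-node graph with arc set `S`). -/
structure LGraph (S : Type) where
  G : DirGraph
  lab : G.A → S

/-- A morphism of labelled graphs: a graph morphism preserving labels. -/
@[ext]
structure LHom {S : Type} (X Y : LGraph S) where
  toHom : Hom X.G Y.G
  hlab : ∀ a, Y.lab (toHom.fA a) = X.lab a

/-- Composition of labelled graph morphisms. -/
def LHom.comp {S : Type} {X Y Z : LGraph S} (g : LHom Y Z) (f : LHom X Y) : LHom X Z :=
  ⟨g.toHom.comp f.toHom, fun a => by
    simpa [Hom.comp, g.hlab] using f.hlab a⟩

/-- The labelled subgraph of `Y` on node set `Set.univ` and an arc set `SA`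
(a dense subobject for the double negation topology on the slice). -/
def lsub {S : Type} (Y : LGraph S) (SA : Set Y.G.A) (h : IsSubgraph Y.G Set.univ SA) :
    LGraph S :=
  ⟨subG Y.G Set.univ SA h, fun a => Y.lab a.val⟩

/-- The inclusion of a labelled subgraph. -/
def lincl {S : Type} (Y : LGraph S) (SA : Set Y.G.A) (h : IsSubgraph Y.G Set.univ SA) :
    LHom (lsub Y SA h) Y :=
  ⟨incl Y.G Set.univ SA h, fun _ => rfl⟩

/-- A labelled graph is separated for the double negation topology on the slice:
morphisms into it agreeing on a dense (all-nodes) labelled subgraph are equal. -/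
def LSeparated {S : Type} (G : LGraph S) : Prop :=
  ∀ (Y : LGraph S) (SA : Set Y.G.A) (h : IsSubgraph Y.G Set.univ SA)
    (g₁ g₂ : LHom Y G),
      g₁.comp (lincl Y SA h) = g₂.comp (lincl Y SA h) → g₁ = g₂

/-! Every dense subobject contains the discrete subgraph on all nodes, so separatedness says exactly
that a labelled morphism into `G` is determined by its node map. Arcs of `G` with the same
endpoints and label are the images of the single arc of a one-arc graph under two morphisms with
the same node map, so this holds exactly when `G` is a labelled transition system. -/

theorem isSubgraph_empty (G : DirGraph) (SN : Set G.N) : IsSubgraph G SN ∅ :=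
  fun _ ha => absurd ha (Set.notMem_empty _)

namespace LGraph

variable {S : Type}

def IsLTS (G : LGraph S) : Prop :=
  ∀ a b : G.G.A, G.G.src a = G.G.src b → G.G.tgt a = G.G.tgt b → G.lab a = G.lab b → a = b

def HomDeterminedByNodes (G : LGraph S) : Prop :=
  ∀ (Y : LGraph S) (g₁ g₂ : LHom Y G), g₁.toHom.fN = g₂.toHom.fN → g₁ = g₂

theorem fN_eq_of_comp_lincl_eq {Y G : LGraph S} {SA : Set Y.G.A}
    {h : IsSubgraph Y.G Set.univ SA} {g₁ g₂ : LHom Y G}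
    (he : g₁.comp (lincl Y SA h) = g₂.comp (lincl Y SA h)) :
    g₁.toHom.fN = g₂.toHom.fN :=
  funext fun x => congrArg (fun f => f.toHom.fN ⟨x, trivial⟩) he

theorem comp_lincl_empty_eq_of_fN_eq {Y G : LGraph S} {g₁ g₂ : LHom Y G}
    (hN : g₁.toHom.fN = g₂.toHom.fN) :
    g₁.comp (lincl Y ∅ (isSubgraph_empty Y.G _)) = g₂.comp (lincl Y ∅ (isSubgraph_empty Y.G _)) :=
  LHom.ext (Hom.ext (congrArg (· ∘ Subtype.val) hN)
    (funext fun a => absurd a.prop (Set.notMem_empty _)))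

theorem lseparated_iff_homDeterminedByNodes (G : LGraph S) :
    LSeparated G ↔ G.HomDeterminedByNodes :=
  ⟨fun hsep Y _ _ hN => hsep Y ∅ (isSubgraph_empty Y.G _) _ _ (comp_lincl_empty_eq_of_fN_eq hN),
    fun hdet Y _ _ _ _ he => hdet Y _ _ (fN_eq_of_comp_lincl_eq he)⟩

def arcOn (G : LGraph S) (s t : G.G.N) (l : S) : LGraph S :=
  ⟨⟨G.G.N, Unit, fun _ => s, fun _ => t⟩, fun _ => l⟩

def arcOnHom (G : LGraph S) {s t : G.G.N} {l : S} (b : G.G.A)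
    (hs : G.G.src b = s) (ht : G.G.tgt b = t) (hl : G.lab b = l) : LHom (G.arcOn s t l) G :=
  ⟨⟨id, fun _ => b, fun _ => hs, fun _ => ht⟩, fun _ => hl⟩

theorem HomDeterminedByNodes.isLTS {G : LGraph S} (hdet : G.HomDeterminedByNodes) : G.IsLTS :=
  fun a b hs ht hl =>
    congrArg (fun f => f.toHom.fA ())
      (hdet _ (G.arcOnHom a rfl rfl rfl) (G.arcOnHom b hs.symm ht.symm hl.symm) rfl)

theorem IsLTS.homDeterminedByNodes {G : LGraph S} (hG : G.IsLTS) : G.HomDeterminedByNodes := by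
  intro Y g₁ g₂ hN
  refine LHom.ext (Hom.ext hN (funext fun a => hG _ _ ?_ ?_ ?_))
  · rw [g₁.toHom.hsrc, g₂.toHom.hsrc, hN]
  · rw [g₁.toHom.htgt, g₂.toHom.htgt, hN]
  · rw [g₁.hlab, g₂.hlab]

theorem homDeterminedByNodes_iff_isLTS (G : LGraph S) : G.HomDeterminedByNodes ↔ G.IsLTS :=
  ⟨HomDeterminedByNodes.isLTS, IsLTS.homDeterminedByNodes⟩

end LGraph

/-- a `Σ`-labelled graph is separated for the double negation
topology on the slice iff it is a labelled transition system: for each pair of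
nodes and each label there is at most one arc between them with that label. -/
theorem lseparated_iff_lts {S : Type} (G : LGraph S) :
    LSeparated G ↔
      ∀ a b : G.G.A, G.G.src a = G.G.src b → G.G.tgt a = G.G.tgt b →
        G.lab a = G.lab b → a = b :=
  G.lseparated_iff_homDeterminedByNodes.trans G.homDeterminedByNodes_iff_isLTS
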